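/- arXiv:2210.07691 — 3 statements merged into one kernel-verified Lean document; each statement's English description precedes it below -/
import Mathlib

section
/- Let d ≥ 1 be an integer and let 1 < p < q < ∞, and set α = d(1/p - 1/q). There exists a constant C > 0 such that for every t > 0 and every f ∈ L^p(ℝ^d): ‖e^{-tH}f‖_{L^q(ℝ^d)} ≤ C (cosh t)^{-d} (tanh t)^{-α/2} ‖f‖_{L^p(ℝ^d)}. -/
open MeasureTheory Real ENNReal NNReal

noncomputable section

/-- The Mehler kernel of the Hermite heat semigroup `e^{-tH}`, `H = -Δ + |x|²`. -/
def mehlerKernel (d : ℕ) (t : ℝ) (x y : EuclideanSpace ℝ (Fin d)) : ℝ :=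
  (2 * π * Real.sinh (2 * t)) ^ (-(d : ℝ) / 2) *
    Real.exp (-(1 / 4) * (Real.cosh t / Real.sinh t) * ‖x - y‖ ^ 2
      - (1 / 4) * Real.tanh t * ‖x + y‖ ^ 2)

/-- The Hermite heat semigroup `e^{-tH}` as an integral operator. -/
def hermiteHeat (d : ℕ) (t : ℝ) (f : EuclideanSpace ℝ (Fin d) → ℂ) :
    EuclideanSpace ℝ (Fin d) → ℂ :=
  fun x => ∫ y, (mehlerKernel d t x y : ℂ) * f y

section helpers

variable {d : ℕ}

local notation "E" => EuclideanSpace ℝ (Fin d)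

lemma hh_factor (a b : ℝ≥0∞) {r pr qr : ℝ} (hr : 0 < r) (hpr : 0 < pr) (hqr : 0 < qr)
    (h1 : r ≤ qr) (h2 : pr ≤ qr) :
    a * b = (a ^ r * b ^ pr) ^ (1 / qr) *
      (a ^ r) ^ (1 / r - 1 / qr) * (b ^ pr) ^ (1 / pr - 1 / qr) := by
  have e1 : (0:ℝ) ≤ 1 / qr := by positivity
  have e2 : (0:ℝ) ≤ 1 / r - 1 / qr := by
    rw [sub_nonneg]; exact one_div_le_one_div_of_le hr h1
  have e3 : (0:ℝ) ≤ 1 / pr - 1 / qr := by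
    rw [sub_nonneg]; exact one_div_le_one_div_of_le hpr h2
  rw [ENNReal.mul_rpow_of_nonneg _ _ e1, ← ENNReal.rpow_mul a, ← ENNReal.rpow_mul b,
    ← ENNReal.rpow_mul a, ← ENNReal.rpow_mul b, mul_assoc, mul_mul_mul_comm, ← mul_assoc,
    ← ENNReal.rpow_add_of_nonneg _ _ (by positivity) (mul_nonneg hr.le e2), mul_assoc,
    ← ENNReal.rpow_add_of_nonneg _ _ (by positivity) (mul_nonneg hpr.le e3)]
  rw [show r * (1/qr) + r * (1/r - 1/qr) = 1 by field_simp; ring,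
    show pr * (1/qr) + pr * (1/pr - 1/qr) = 1 by field_simp; ring]
  simp

/-- three-function Hölder, left-assoc form -/
lemma hh_holder3 {α : Type*} [MeasurableSpace α] {μ : Measure α} (P Q R : α → ℝ≥0∞)
    (hP : AEMeasurable P μ) (hQ : AEMeasurable Q μ) (hR : AEMeasurable R μ)
    {e1 e2 e3 : ℝ} (h1 : 0 ≤ e1) (h2 : 0 ≤ e2) (h3 : 0 ≤ e3) (hsum : e1 + e2 + e3 = 1) :
    ∫⁻ y, P y ^ e1 * Q y ^ e2 * R y ^ e3 ∂μ ≤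
      (∫⁻ y, P y ∂μ) ^ e1 * (∫⁻ y, Q y ∂μ) ^ e2 * (∫⁻ y, R y ∂μ) ^ e3 := by
  have := ENNReal.lintegral_prod_norm_pow_le (μ := μ) (Finset.univ : Finset (Fin 3))
    (f := ![P, Q, R]) (p := ![e1, e2, e3]) ?_ ?_ ?_
  · simpa [Fin.prod_univ_three] using this
  · intro i _; fin_cases i <;> assumption
  · simp [Fin.sum_univ_three, hsum]
  · intro i _; fin_cases i <;> assumption

/-- Young's inequality for convolution, lintegral form, on Euclidean space. -/
lemma hh_young (K F : E → ℝ≥0∞) (hK : Measurable K) (hF : Measurable F)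
    {r pr qr : ℝ} (hr : 0 < r) (hpr : 0 < pr) (hqr : 0 < qr)
    (h1 : r ≤ qr) (h2 : pr ≤ qr) (hsum : 1 / pr + 1 / r = 1 + 1 / qr) :
    ∫⁻ x, (∫⁻ y, K (x - y) * F y) ^ qr ≤
      (∫⁻ z, K z ^ r) ^ (qr / r) * (∫⁻ y, F y ^ pr) ^ (qr / pr) := by
  set A := ∫⁻ z, K z ^ r with hA
  set B := ∫⁻ y, F y ^ pr with hB
  have hKr : Measurable fun z : E => K z ^ r := hK.pow_const r
  have hFp : Measurable fun y : E => F y ^ pr := hF.pow_const pr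
  have e1 : (0:ℝ) ≤ 1 / qr := by positivity
  have e2 : (0:ℝ) ≤ 1 / r - 1 / qr := by
    rw [sub_nonneg]; exact one_div_le_one_div_of_le hr h1
  have e3 : (0:ℝ) ≤ 1 / pr - 1 / qr := by
    rw [sub_nonneg]; exact one_div_le_one_div_of_le hpr h2
  have hsum3 : 1 / qr + (1 / r - 1 / qr) + (1 / pr - 1 / qr) = 1 := by
    have := hsum; linarith
  have step1 : ∀ x : E, ∫⁻ y, K (x - y) * F y ≤
      (∫⁻ y, K (x - y) ^ r * F y ^ pr) ^ (1 / qr) *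
        A ^ (1 / r - 1 / qr) * B ^ (1 / pr - 1 / qr) := by
    intro x
    have trans : ∫⁻ y, K (x - y) ^ r = A := by
      rw [hA]
      exact (Measure.measurePreserving_sub_left volume x).lintegral_comp hKr
    calc ∫⁻ y, K (x - y) * F y
        = ∫⁻ y, (K (x-y) ^ r * F y ^ pr) ^ (1/qr) *
            (K (x-y) ^ r) ^ (1/r - 1/qr) * (F y ^ pr) ^ (1/pr - 1/qr) :=
          lintegral_congr fun y => hh_factor _ _ hr hpr hqr h1 h2
      _ ≤ (∫⁻ y, K (x-y) ^ r * F y ^ pr) ^ (1/qr) *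
            (∫⁻ y, K (x-y) ^ r) ^ (1/r - 1/qr) * (∫⁻ y, F y ^ pr) ^ (1/pr - 1/qr) :=
          hh_holder3 _ _ _ (((hK.comp (measurable_const.sub measurable_id)).pow_const r).mul
              hFp).aemeasurable
            ((hK.comp (measurable_const.sub measurable_id)).pow_const r).aemeasurable
            hFp.aemeasurable e1 e2 e3 hsum3
      _ = (∫⁻ y, K (x - y) ^ r * F y ^ pr) ^ (1 / qr) *
            A ^ (1 / r - 1 / qr) * B ^ (1 / pr - 1 / qr) := by rw [trans]
  have hq0 : (0:ℝ) ≤ qr := hqr.le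
  have step2 : ∀ x : E, (∫⁻ y, K (x - y) * F y) ^ qr ≤
      (∫⁻ y, K (x - y) ^ r * F y ^ pr) *
        (A ^ (qr / r - 1) * B ^ (qr / pr - 1)) := by
    intro x
    calc (∫⁻ y, K (x - y) * F y) ^ qr
        ≤ ((∫⁻ y, K (x - y) ^ r * F y ^ pr) ^ (1 / qr) *
            A ^ (1 / r - 1 / qr) * B ^ (1 / pr - 1 / qr)) ^ qr :=
          ENNReal.rpow_le_rpow (step1 x) hq0
      _ = (∫⁻ y, K (x - y) ^ r * F y ^ pr) *
            (A ^ (qr / r - 1) * B ^ (qr / pr - 1)) := by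
          rw [ENNReal.mul_rpow_of_nonneg _ _ hq0, ENNReal.mul_rpow_of_nonneg _ _ hq0,
            ← ENNReal.rpow_mul, ← ENNReal.rpow_mul, ← ENNReal.rpow_mul,
            one_div_mul_cancel hqr.ne', ENNReal.rpow_one,
            show (1/r - 1/qr) * qr = qr / r - 1 by field_simp,
            show (1/pr - 1/qr) * qr = qr / pr - 1 by field_simp,
            mul_assoc]
  have hmeas2 : Measurable fun z : E × E => K (z.1 - z.2) ^ r * F z.2 ^ pr :=
    ((hK.comp (measurable_fst.sub measurable_snd)).pow_const r).mul
      (hFp.comp measurable_snd)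
  have tonelli : ∫⁻ x, ∫⁻ y, K (x - y) ^ r * F y ^ pr = A * B := by
    rw [lintegral_lintegral_swap hmeas2.aemeasurable]
    have inner : ∀ y : E, ∫⁻ x, K (x - y) ^ r * F y ^ pr = A * F y ^ pr := by
      intro y
      have m1 : Measurable fun x : E => K (x - y) ^ r :=
        (hK.comp (measurable_id.sub_const y)).pow_const r
      rw [lintegral_mul_const _ m1]
      congr 1
      exact (measurePreserving_sub_right volume y).lintegral_comp hKr
    calc ∫⁻ y, ∫⁻ x, K (x - y) ^ r * F y ^ pr = ∫⁻ y, A * F y ^ pr :=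
          lintegral_congr inner
      _ = A * B := lintegral_const_mul _ hFp
  calc ∫⁻ x, (∫⁻ y, K (x - y) * F y) ^ qr
      ≤ ∫⁻ x, (∫⁻ y, K (x - y) ^ r * F y ^ pr) *
          (A ^ (qr / r - 1) * B ^ (qr / pr - 1)) := lintegral_mono step2
    _ = (A * B) * (A ^ (qr / r - 1) * B ^ (qr / pr - 1)) := by
        rw [lintegral_mul_const'' _ hmeas2.lintegral_prod_right'.aemeasurable, tonelli]
    _ = A ^ (qr / r) * B ^ (qr / pr) := by
        have hra : (1:ℝ) ≤ qr / r := by rw [le_div_iff₀ hr]; simpa using h1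
        have hpa : (1:ℝ) ≤ qr / pr := by rw [le_div_iff₀ hpr]; simpa using h2
        rw [mul_mul_mul_comm, ← ENNReal.rpow_one A, ← ENNReal.rpow_one B, ← ENNReal.rpow_mul,
          ← ENNReal.rpow_mul]
        rw [← ENNReal.rpow_add_of_nonneg _ _ (by norm_num) (by linarith),
          ← ENNReal.rpow_add_of_nonneg _ _ (by norm_num) (by linarith)]
        norm_num

lemma hh_int_gauss {b : ℝ} (hb : 0 < b) :
    Integrable (fun v : E => rexp (-b * ‖v‖ ^ 2)) := by
  have h := (GaussianFourier.integrable_cexp_neg_mul_sq_norm_add (V := E)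
    (b := (b : ℂ)) (by simpa using hb) 0 0).re
  refine h.congr (Filter.Eventually.of_forall fun v => ?_)
  have : -(b:ℂ) * (‖v‖:ℂ) ^ 2 + 0 * (inner ℝ (0:E) v : ℝ) = ((-b * ‖v‖^2 : ℝ) : ℂ) := by
    push_cast; ring
  simp only [RCLike.re_to_complex]
  rw [this, Complex.exp_ofReal_re]

lemma hh_gauss {b c0 : ℝ} (hb : 0 < b) (hc0 : 0 < c0) :
    ∫⁻ z : E, ENNReal.ofReal (c0 * rexp (-b * ‖z‖ ^ 2)) =
      ENNReal.ofReal (c0 * (π / b) ^ ((d : ℝ) / 2)) := by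
  rw [← ofReal_integral_eq_lintegral_ofReal ((hh_int_gauss hb).const_mul c0)
    (Filter.Eventually.of_forall fun z => by positivity)]
  rw [MeasureTheory.integral_const_mul, GaussianFourier.integral_rexp_neg_mul_sq_norm hb]
  simp

lemma hh_const {t rr pr qr : ℝ} (d : ℕ) (ht : 0 < t) (hrr : 0 < rr)
    (h1r : 1 / rr = 1 - 1 / pr + 1 / qr) :
    (2 * π * Real.sinh (2 * t)) ^ (-(d : ℝ) / 2) *
        ((4 * π / rr) * Real.tanh t) ^ ((d : ℝ) / (2 * rr)) =
      ((4 * π) ^ (-(d : ℝ) / 2) * (4 * π / rr) ^ ((d : ℝ) / (2 * rr))) *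
        Real.cosh t ^ (-(d : ℝ)) * Real.tanh t ^ (-((d : ℝ) * (1 / pr - 1 / qr)) / 2) := by
  have hc : 0 < Real.cosh t := Real.cosh_pos t
  have hs : 0 < Real.sinh t := Real.sinh_pos_iff.mpr ht
  have htn : 0 < Real.tanh t := by rw [Real.tanh_eq_sinh_div_cosh]; positivity
  have hπ : 0 < π := Real.pi_pos
  have h2 : 2 * π * Real.sinh (2 * t) = 4 * π * Real.tanh t * Real.cosh t ^ (2:ℕ) := by
    rw [Real.sinh_two_mul, Real.tanh_eq_sinh_div_cosh]; field_simp; ring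
  have hcosh2 : (Real.cosh t ^ (2:ℕ)) ^ (-(d:ℝ) / 2) = Real.cosh t ^ (-(d:ℝ)) := by
    rw [← Real.rpow_natCast (Real.cosh t) 2, ← Real.rpow_mul hc.le]
    congr 1; push_cast; ring
  have htanh2 : Real.tanh t ^ (-(d:ℝ) / 2) * Real.tanh t ^ ((d:ℝ) / (2 * rr)) =
      Real.tanh t ^ (-((d:ℝ) * (1 / pr - 1 / qr)) / 2) := by
    rw [← Real.rpow_add htn]; congr 1
    have h3 : (d:ℝ) / (2 * rr) = (d:ℝ) / 2 * (1 / rr) := by ring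
    rw [h3, h1r]; ring
  have e1 : (2 * π * Real.sinh (2 * t)) ^ (-(d : ℝ) / 2) =
      ((4 * π) * Real.tanh t) ^ (-(d:ℝ)/2) * (Real.cosh t ^ (2:ℕ)) ^ (-(d:ℝ)/2) := by
    rw [h2, ← Real.mul_rpow (by positivity) (by positivity)]
  have e1' : ((4 * π) * Real.tanh t) ^ (-(d:ℝ)/2) =
      (4 * π) ^ (-(d:ℝ)/2) * Real.tanh t ^ (-(d:ℝ)/2) :=
    Real.mul_rpow (by positivity) htn.le
  have e2 : ((4 * π / rr) * Real.tanh t) ^ ((d : ℝ) / (2 * rr)) =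
      (4 * π / rr) ^ ((d:ℝ)/(2*rr)) * Real.tanh t ^ ((d:ℝ)/(2*rr)) :=
    Real.mul_rpow (by positivity) htn.le
  rw [e1, e1', e2, ← hcosh2, ← htanh2]; ring

end helpers

theorem stmt2 (d : ℕ) (hd : 1 ≤ d) (p q : ℝ≥0∞) (hp : 1 < p) (hpq : p < q) (hq : q < ∞) :
    ∃ C : ℝ, 0 < C ∧
      ∀ t : ℝ, 0 < t → ∀ f : EuclideanSpace ℝ (Fin d) → ℂ, MemLp f p volume →
        eLpNorm (hermiteHeat d t f) q volume ≤
          ENNReal.ofReal (C * Real.cosh t ^ (-(d : ℝ)) *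
              Real.tanh t ^ (-((d : ℝ) * (p⁻¹.toReal - q⁻¹.toReal)) / 2)) *
            eLpNorm f p volume := by
  have hp0 : p ≠ 0 := (zero_lt_one.trans hp).ne'
  have hpt : p ≠ ∞ := (hpq.trans hq).ne
  have hq0 : q ≠ 0 := (zero_lt_one.trans (hp.trans hpq)).ne'
  have hqt : q ≠ ∞ := hq.ne
  set pr := p.toReal with hprdef
  set qr := q.toReal with hqrdef
  have hpr1 : 1 < pr := by
    rw [show (1:ℝ) = (1:ℝ≥0∞).toReal by simp]
    exact (ENNReal.toReal_lt_toReal (by simp) hpt).mpr hp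
  have hprqr : pr < qr := (ENNReal.toReal_lt_toReal hpt hqt).mpr hpq
  have hpr0 : 0 < pr := lt_trans one_pos hpr1
  have hqr0 : 0 < qr := lt_trans hpr0 hprqr
  set rr := (1 - 1/pr + 1/qr)⁻¹ with hrrdef
  have hbase : 0 < 1 - 1/pr + 1/qr := by
    have h1 : 1/pr < 1 := by rw [div_lt_one hpr0]; exact hpr1
    have h2 : 0 < 1/qr := by positivity
    linarith
  have hrr : 0 < rr := inv_pos.mpr hbase
  have h1r : 1/rr = 1 - 1/pr + 1/qr := by rw [hrrdef, one_div, inv_inv]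
  have hsum : 1/pr + 1/rr = 1 + 1/qr := by rw [h1r]; ring
  have hrq : rr ≤ qr := by
    have h2 : 1/qr ≤ 1/rr := by
      rw [h1r]
      have : 1/pr ≤ 1 := by rw [div_le_one hpr0]; exact hpr1.le
      linarith
    exact le_of_one_div_le_one_div hqr0 h2
  have hpq' : pr ≤ qr := hprqr.le
  refine ⟨(4*π)^(-(d:ℝ)/2) * (4*π/rr)^((d:ℝ)/(2*rr)), by positivity, ?_⟩
  intro t ht f hf
  have hexp : p⁻¹.toReal - q⁻¹.toReal = 1/pr - 1/qr := by
    rw [ENNReal.toReal_inv, ENNReal.toReal_inv, one_div, one_div]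
  rw [hexp]
  have hc : 0 < Real.cosh t := Real.cosh_pos t
  have hs : 0 < Real.sinh t := Real.sinh_pos_iff.mpr ht
  have htn : 0 < Real.tanh t := by rw [Real.tanh_eq_sinh_div_cosh]; positivity
  have hs2 : 0 < Real.sinh (2*t) := Real.sinh_pos_iff.mpr (by linarith)
  have hπ : 0 < π := Real.pi_pos
  set c0 := (2*π*Real.sinh (2*t)) ^ (-(d:ℝ)/2) with hc0def
  have hc0 : 0 < c0 := Real.rpow_pos_of_pos (by positivity) _
  set a := Real.cosh t / Real.sinh t with hadef
  have ha : 0 < a := by positivity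
  set K : EuclideanSpace ℝ (Fin d) → ℝ≥0∞ :=
    fun z => ENNReal.ofReal (c0 * rexp (-(a/4) * ‖z‖^2)) with hKdef
  have hKmeas : Measurable K := by
    have hcont : Continuous fun z : EuclideanSpace ℝ (Fin d) =>
        c0 * rexp (-(a/4) * ‖z‖^2) := by fun_prop
    exact (ENNReal.continuous_ofReal.comp hcont).measurable
  obtain ⟨f', hf'meas, hff'⟩ := hf.1
  set F : EuclideanSpace ℝ (Fin d) → ℝ≥0∞ := fun y => (‖f' y‖₊ : ℝ≥0∞) with hFdef
  have hFmeas : Measurable F := hf'meas.measurable.nnnorm.coe_nnreal_ennreal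
  have dom : ∀ x, (‖hermiteHeat d t f x‖₊ : ℝ≥0∞) ≤ ∫⁻ y, K (x - y) * F y := by
    intro x
    calc (‖hermiteHeat d t f x‖₊ : ℝ≥0∞)
        ≤ ∫⁻ y, ‖(mehlerKernel d t x y : ℂ) * f y‖₊ :=
          enorm_integral_le_lintegral_enorm _
      _ ≤ ∫⁻ y, K (x - y) * (‖f y‖₊ : ℝ≥0∞) := by
          refine lintegral_mono fun y => ?_
          rw [nnnorm_mul, ENNReal.coe_mul]
          refine mul_le_mul_left ?_ _
          have hmnn : 0 ≤ mehlerKernel d t x y := by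
            rw [mehlerKernel]; positivity
          have hm : mehlerKernel d t x y ≤ c0 * rexp (-(a/4) * ‖x - y‖^2) := by
            rw [mehlerKernel, ← hc0def, ← hadef]
            refine mul_le_mul_of_nonneg_left (Real.exp_le_exp.mpr ?_) hc0.le
            have h4 := mul_nonneg htn.le (sq_nonneg ‖x + y‖)
            nlinarith
          calc (‖(mehlerKernel d t x y : ℂ)‖₊ : ℝ≥0∞)
              = ENNReal.ofReal (mehlerKernel d t x y) := by
                rw [Complex.nnnorm_real, ← Real.enorm_eq_ofReal hmnn]; rfl
            _ ≤ K (x - y) := ENNReal.ofReal_le_ofReal hm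
      _ = ∫⁻ y, K (x - y) * F y := by
          refine lintegral_congr_ae ?_
          filter_upwards [hff'] with y hy
          rw [hFdef]; simp only [hy]
  have young := hh_young K F hKmeas hFmeas hrr hpr0 hqr0 hrq hpq' hsum
  have hb : 0 < rr * a / 4 := by positivity
  have hKr : ∫⁻ z, K z ^ rr =
      ENNReal.ofReal (c0 ^ rr * (π / (rr * a / 4)) ^ ((d:ℝ)/2)) := by
    have hpt2 : ∀ z : EuclideanSpace ℝ (Fin d), K z ^ rr =
        ENNReal.ofReal ((c0 ^ rr) * rexp (-(rr*a/4) * ‖z‖^2)) := by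
      intro z
      rw [hKdef]
      rw [ENNReal.ofReal_rpow_of_pos (by positivity)]
      congr 1
      rw [Real.mul_rpow hc0.le (Real.exp_nonneg _), ← Real.exp_mul]
      congr 1
      ring
    rw [lintegral_congr hpt2, hh_gauss hb (Real.rpow_pos_of_pos hc0 rr)]
  have hfq : eLpNorm (hermiteHeat d t f) q volume ≤
      (∫⁻ x, (∫⁻ y, K (x-y) * F y)^qr)^(1/qr) := by
    rw [eLpNorm_eq_lintegral_rpow_enorm_toReal hq0 hqt]
    refine ENNReal.rpow_le_rpow (lintegral_mono fun x => ?_) (by positivity)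
    exact ENNReal.rpow_le_rpow (dom x) hqr0.le
  have hFnorm : (∫⁻ y, F y ^ pr)^(1/pr) = eLpNorm f p volume := by
    rw [eLpNorm_congr_ae hff', eLpNorm_eq_lintegral_rpow_enorm_toReal hp0 hpt]; rfl
  calc eLpNorm (hermiteHeat d t f) q volume
      ≤ (∫⁻ x, (∫⁻ y, K (x-y) * F y)^qr)^(1/qr) := hfq
    _ ≤ ((∫⁻ z, K z ^ rr)^(qr/rr) * (∫⁻ y, F y ^ pr)^(qr/pr))^(1/qr) :=
        ENNReal.rpow_le_rpow young (by positivity)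
    _ = (∫⁻ z, K z ^ rr)^(1/rr) * (∫⁻ y, F y ^ pr)^(1/pr) := by
        rw [ENNReal.mul_rpow_of_nonneg _ _ (by positivity), ← ENNReal.rpow_mul,
          ← ENNReal.rpow_mul,
          show qr/rr * (1/qr) = 1/rr by field_simp,
          show qr/pr * (1/qr) = 1/pr by field_simp]
    _ = ENNReal.ofReal (c0 * (π/(rr*a/4))^((d:ℝ)/(2*rr))) * eLpNorm f p volume := by
        rw [hKr, hFnorm, ENNReal.ofReal_rpow_of_pos (by positivity)]
        congr 2
        rw [Real.mul_rpow (Real.rpow_pos_of_pos hc0 rr).le (by positivity)]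
        have g1 : (c0 ^ rr) ^ (1/rr) = c0 := by
          rw [← Real.rpow_mul hc0.le, mul_one_div_cancel hrr.ne', Real.rpow_one]
        have g2 : ((π/(rr*a/4)) ^ ((d:ℝ)/2)) ^ (1/rr) = (π/(rr*a/4)) ^ ((d:ℝ)/(2*rr)) := by
          rw [← Real.rpow_mul (by positivity),
            show (d:ℝ)/2 * (1/rr) = (d:ℝ)/(2*rr) by ring]
        rw [g1, g2]
    _ = ENNReal.ofReal (((4*π)^(-(d:ℝ)/2) * (4*π/rr)^((d:ℝ)/(2*rr))) *
          Real.cosh t ^ (-(d:ℝ)) * Real.tanh t ^ (-((d:ℝ) * (1/pr - 1/qr))/2)) *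
          eLpNorm f p volume := by
        congr 2
        have hπb : π / (rr*a/4) = (4*π/rr) * Real.tanh t := by
          rw [hadef, Real.tanh_eq_sinh_div_cosh]
          field_simp
        rw [hπb, hc0def, hh_const d ht hrr h1r]
end
end

section
/- Let d ≥ 1 be an integer and let 0 < α < d. There exists a constant C > 0 such that for every t > 0 and all x, y ∈ ℝ^d with x ≠ y: (2π sinh 2t)^{-d/2} exp(-(1/4) coth(t)|x-y|² - (1/4) tanh(t)|x+y|²) ≤ C (cosh t)^{-d} (tanh t)^{-α/2} |x - y|^{α - d}. -/
open MeasureTheory Real ENNReal NNReal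

noncomputable section

lemma exp_neg_le_aux (β u : ℝ) (hβ : 0 < β) (hu : 0 < u) :
    Real.exp (-u) ≤ β ^ β * u ^ (-β) := by
  have h1 : u ≤ β * Real.exp (u / β) := by
    have h := Real.add_one_le_exp (u / β)
    have h2 := mul_le_mul_of_nonneg_left h hβ.le
    rw [mul_add, mul_one, mul_div_cancel₀ _ hβ.ne'] at h2
    linarith
  have h2 : u ^ β ≤ β ^ β * Real.exp u := by
    calc u ^ β ≤ (β * Real.exp (u/β)) ^ β := Real.rpow_le_rpow hu.le h1 hβ.le
    _ = β ^ β * (Real.exp (u/β)) ^ β := Real.mul_rpow hβ.le (Real.exp_pos _).le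
    _ = β ^ β * Real.exp u := by
        rw [← Real.exp_mul, div_mul_cancel₀ _ hβ.ne']
  rw [Real.exp_neg, Real.rpow_neg hu.le, inv_eq_one_div, inv_eq_one_div, mul_one_div,
    div_le_div_iff₀ (Real.exp_pos _) (Real.rpow_pos_of_pos hu β)]
  linarith

theorem stmt4 (d : ℕ) (hd : 1 ≤ d) (α : ℝ) (hα : 0 < α) (hαd : α < d) :
    ∃ C : ℝ, 0 < C ∧
      ∀ t : ℝ, 0 < t → ∀ x y : EuclideanSpace ℝ (Fin d), x ≠ y →
        mehlerKernel d t x y ≤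
          C * Real.cosh t ^ (-(d : ℝ)) * Real.tanh t ^ (-α / 2) *
            ‖x - y‖ ^ (α - (d : ℝ)) := by
  set β : ℝ := ((d : ℝ) - α) / 2 with hβdef
  have hβ : 0 < β := by simp [hβdef]; linarith
  refine ⟨(4 * π) ^ (-(d : ℝ) / 2) * 4 ^ β * β ^ β, by positivity, ?_⟩
  intro t ht x y hxy
  set s := Real.sinh t with hs_def
  set c := Real.cosh t with hc_def
  have hs : 0 < s := Real.sinh_pos_iff.2 ht
  have hc : 0 < c := Real.cosh_pos t
  have hth : 0 < Real.tanh t := by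
    rw [Real.tanh_eq_sinh_div_cosh]; exact div_pos hs hc
  have hr : 0 < ‖x - y‖ := by
    rw [norm_pos_iff]; exact sub_ne_zero.2 hxy
  set r := ‖x - y‖ with hr_def
  set u : ℝ := 1 / 4 * (c / s) * r ^ 2 with hu_def
  have hu : 0 < u := by positivity
  have hA : 0 < 2 * π * Real.sinh (2 * t) := by
    have : 0 < Real.sinh (2 * t) := Real.sinh_pos_iff.2 (by linarith)
    positivity
  have step1 : mehlerKernel d t x y ≤ (2 * π * Real.sinh (2 * t)) ^ (-(d : ℝ) / 2) *
      Real.exp (-u) := by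
    unfold mehlerKernel
    apply mul_le_mul_of_nonneg_left _ (Real.rpow_nonneg hA.le _)
    apply Real.exp_le_exp.2
    have h1 : 0 ≤ 1 / 4 * Real.tanh t * ‖x + y‖ ^ 2 := by positivity
    nlinarith [h1]
  have step2 : Real.exp (-u) ≤ β ^ β * u ^ (-β) := exp_neg_le_aux β u hβ hu
  have key : (2 * π * Real.sinh (2 * t)) ^ (-(d : ℝ) / 2) * (β ^ β * u ^ (-β)) =
      ((4 * π) ^ (-(d : ℝ) / 2) * 4 ^ β * β ^ β) * c ^ (-(d : ℝ)) *
        Real.tanh t ^ (-α / 2) * r ^ (α - (d : ℝ)) := by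
    have hsinh2 : Real.sinh (2 * t) = 2 * s * c := by
      rw [Real.sinh_two_mul]
    have h4π : (0:ℝ) < 4 * π := by positivity
    rw [Real.rpow_def_of_pos hA, Real.rpow_def_of_pos hu, Real.rpow_def_of_pos hβ,
      Real.rpow_def_of_pos h4π, Real.rpow_def_of_pos (by norm_num : (0:ℝ) < 4),
      Real.rpow_def_of_pos hc, Real.rpow_def_of_pos hth, Real.rpow_def_of_pos hr]
    simp only [← Real.exp_add]
    congr 1
    have l1 : Real.log (2 * π * Real.sinh (2 * t)) =
        Real.log 2 + Real.log π + (Real.log 2 + Real.log s + Real.log c) := by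
      rw [hsinh2, Real.log_mul (by positivity) (by positivity),
        Real.log_mul (by norm_num) (Real.pi_pos.ne'),
        Real.log_mul (by positivity) hc.ne', Real.log_mul (by norm_num) hs.ne']
    have l2 : Real.log u = -(2 * Real.log 2) + (Real.log c - Real.log s) + 2 * Real.log r := by
      rw [hu_def, Real.log_mul (by positivity) (by positivity),
        Real.log_mul (by norm_num) (div_pos hc hs).ne',
        Real.log_div hc.ne' hs.ne', Real.log_pow]
      have : Real.log (1 / 4) = -(2 * Real.log 2) := by
        rw [Real.log_div one_ne_zero (by norm_num), Real.log_one,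
          show (4:ℝ) = 2 ^ 2 by norm_num, Real.log_pow]
        push_cast; ring
      rw [this]; push_cast; ring
    have l3 : Real.log (4 * π) = 2 * Real.log 2 + Real.log π := by
      rw [Real.log_mul (by norm_num) (Real.pi_pos.ne'),
        show (4:ℝ) = 2 ^ 2 by norm_num, Real.log_pow]
      push_cast; ring
    have l4 : Real.log (4:ℝ) = 2 * Real.log 2 := by
      rw [show (4:ℝ) = 2 ^ 2 by norm_num, Real.log_pow]; push_cast; ring
    have l5 : Real.log (Real.tanh t) = Real.log s - Real.log c := by
      rw [Real.tanh_eq_sinh_div_cosh, Real.log_div hs.ne' hc.ne']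
    rw [l1, l2, l3, l4, l5, hβdef]
    ring
  calc mehlerKernel d t x y
      ≤ (2 * π * Real.sinh (2 * t)) ^ (-(d : ℝ) / 2) * Real.exp (-u) := step1
    _ ≤ (2 * π * Real.sinh (2 * t)) ^ (-(d : ℝ) / 2) * (β ^ β * u ^ (-β)) :=
        mul_le_mul_of_nonneg_left step2 (Real.rpow_nonneg hA.le _)
    _ = _ := key
end
end

section
/- Let d ≥ 1 be an integer, β > 0, and 1 ≤ q ≤ p ≤ ∞. There exists a constant C > 0 (depending on d, β, p, q) such that for every t with 0 < t ≤ 1 and every f ∈ L^p(ℝ^d): ‖ e^{-(t/4)(1 + |x|²)^{β}} f ‖_{L^q(ℝ^d)} ≤ C t^{-(d/(2β))(1/q - 1/p)} ‖f‖_{L^p(ℝ^d)}, where the left-hand side is the L^q norm of the function x ↦ e^{-(t/4)(1+|x|²)^{β}} f(x). -/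
open MeasureTheory Real ENNReal NNReal


lemma aux_summable {ρ : ℝ} (hρ : 0 < ρ) (d : ℕ) :
    Summable (fun n : ℕ => Real.exp (-(n:ℝ) ^ ρ) * ((n:ℝ) + 1) ^ d) := by
  set m : ℕ := ⌈((d:ℝ) + 2) / ρ⌉₊ with hm
  set C : ℝ := (m.factorial : ℝ) * 2 ^ (d + 2) with hC
  have hC1 : (1:ℝ) ≤ max C 1 := le_max_right _ _
  have hCpos : 0 < C := by positivity
  have key : ∀ n : ℕ, Real.exp (-(n:ℝ) ^ ρ) * ((n:ℝ) + 1) ^ d ≤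
      max C 1 * (1 / ((n:ℝ) + 1) ^ 2) := by
    intro n
    rcases Nat.eq_zero_or_pos n with rfl | hn
    · simp [Real.zero_rpow hρ.ne']
    · have hn1 : (1:ℝ) ≤ (n:ℝ) := by exact_mod_cast hn
      have hnp : (0:ℝ) < (n:ℝ) := by linarith
      -- exp lower bound
      have hx : (0:ℝ) ≤ (n:ℝ) ^ ρ := Real.rpow_nonneg hnp.le _
      have e0 : ((n:ℝ) ^ ρ) ^ m / (m.factorial : ℝ) ≤ Real.exp ((n:ℝ) ^ ρ) :=
        Real.pow_div_factorial_le_exp ((n:ℝ) ^ ρ) hx m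
      have e1 : (n:ℝ) ^ (d + 2 : ℕ) ≤ ((n:ℝ) ^ ρ) ^ m := by
        rw [← Real.rpow_natCast ((n:ℝ) ^ ρ) m, ← Real.rpow_mul hnp.le,
          ← Real.rpow_natCast (n:ℝ) (d + 2)]
        apply Real.rpow_le_rpow_of_exponent_le hn1
        have := Nat.le_ceil (((d:ℝ) + 2) / ρ)
        rw [← hm] at this
        push_cast
        calc (d:ℝ) + 2 = (((d:ℝ) + 2) / ρ) * ρ := by field_simp
          _ ≤ (m:ℝ) * ρ := by nlinarith [hρ]
          _ = ρ * m := by ring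
      have e2 : Real.exp (-(n:ℝ) ^ ρ) ≤ (m.factorial : ℝ) / (n:ℝ) ^ (d + 2 : ℕ) := by
        rw [Real.exp_neg, inv_eq_one_div,
          div_le_div_iff₀ (Real.exp_pos _) (by positivity)]
        calc 1 * (n:ℝ) ^ (d + 2 : ℕ) = (n:ℝ) ^ (d + 2 : ℕ) := one_mul _
          _ ≤ ((n:ℝ) ^ ρ) ^ m := e1
          _ = (m.factorial : ℝ) * (((n:ℝ) ^ ρ) ^ m / (m.factorial : ℝ)) := by
              field_simp
          _ ≤ (m.factorial : ℝ) * Real.exp ((n:ℝ) ^ ρ) := by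
              have : (0:ℝ) < (m.factorial : ℝ) := by positivity
              nlinarith [e0]
      have e3 : ((n:ℝ) + 1) ^ (d + 2) ≤ 2 ^ (d + 2) * (n:ℝ) ^ (d + 2) := by
        rw [← mul_pow]
        exact pow_le_pow_left₀ (by linarith) (by linarith) _
      calc Real.exp (-(n:ℝ) ^ ρ) * ((n:ℝ) + 1) ^ d
          ≤ ((m.factorial : ℝ) / (n:ℝ) ^ (d + 2 : ℕ)) * ((n:ℝ) + 1) ^ d := by
            apply mul_le_mul_of_nonneg_right e2 (by positivity)
        _ ≤ C * (1 / ((n:ℝ) + 1) ^ 2) := by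
            rw [div_mul_eq_mul_div, mul_one_div, div_le_div_iff₀ (by positivity) (by positivity)]
            calc (m.factorial : ℝ) * ((n:ℝ) + 1) ^ d * ((n:ℝ) + 1) ^ 2
                = (m.factorial : ℝ) * ((n:ℝ) + 1) ^ (d + 2) := by ring
              _ ≤ (m.factorial : ℝ) * (2 ^ (d + 2) * (n:ℝ) ^ (d + 2)) := by
                  have hf : (0:ℝ) < (m.factorial : ℝ) := by positivity
                  nlinarith [e3]
              _ = C * (n:ℝ) ^ (d + 2 : ℕ) := by rw [hC]; ring
        _ ≤ max C 1 * (1 / ((n:ℝ) + 1) ^ 2) := by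
            apply mul_le_mul_of_nonneg_right (le_max_left _ _) (by positivity)
  have hsum : Summable (fun n : ℕ => max C 1 * (1 / ((n:ℝ) + 1) ^ 2)) := by
    apply Summable.mul_left
    have h2 : Summable (fun n : ℕ => 1 / (n:ℝ) ^ 2) := summable_one_div_nat_pow.mpr one_lt_two
    have := (_root_.summable_nat_add_iff (f := fun n : ℕ => 1 / (n:ℝ) ^ 2) 1).mpr h2
    apply this.congr
    intro n
    push_cast
    ring
  exact Summable.of_nonneg_of_le (fun n => by positivity) key hsum

lemma aux_lt_top (d : ℕ) {ρ : ℝ} (hρ : 0 < ρ) :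
    ∫⁻ x : EuclideanSpace ℝ (Fin d), ENNReal.ofReal (Real.exp (-‖x‖ ^ ρ)) < ⊤ := by
  set A : ℕ → Set (EuclideanSpace ℝ (Fin d)) :=
    fun n => Metric.closedBall 0 ((n:ℝ) + 1) \ Metric.ball 0 (n:ℝ) with hA
  set V : ℝ≥0∞ := volume (Metric.ball (0 : EuclideanSpace ℝ (Fin d)) 1) with hV
  have hVlt : V < ⊤ := measure_ball_lt_top
  have hcover : (Set.univ : Set (EuclideanSpace ℝ (Fin d))) ⊆ ⋃ n, A n := by
    intro x _
    refine Set.mem_iUnion.2 ⟨⌊‖x‖⌋₊, ?_, ?_⟩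
    · simp only [Metric.mem_closedBall, dist_zero_right]
      have := Nat.lt_floor_add_one ‖x‖; linarith
    · simp only [Metric.mem_ball, dist_zero_right, not_lt]
      exact Nat.floor_le (norm_nonneg x)
  have step : ∀ n : ℕ, ∫⁻ x in A n, ENNReal.ofReal (Real.exp (-‖x‖ ^ ρ)) ≤
      ENNReal.ofReal (Real.exp (-(n:ℝ) ^ ρ) * ((n:ℝ) + 1) ^ d) * V := by
    intro n
    have hmeas : volume (A n) ≤ ENNReal.ofReal (((n:ℝ) + 1) ^ d) * V := by
      calc volume (A n) ≤ volume (Metric.closedBall (0 : EuclideanSpace ℝ (Fin d)) ((n:ℝ)+1)) :=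
            measure_mono Set.diff_subset
        _ = ENNReal.ofReal (((n:ℝ) + 1) ^ Module.finrank ℝ (EuclideanSpace ℝ (Fin d))) * V :=
            Measure.addHaar_closedBall _ _ (by positivity)
        _ = ENNReal.ofReal (((n:ℝ) + 1) ^ d) * V := by rw [finrank_euclideanSpace_fin]
    calc ∫⁻ x in A n, ENNReal.ofReal (Real.exp (-‖x‖ ^ ρ))
        ≤ ∫⁻ _ in A n, ENNReal.ofReal (Real.exp (-(n:ℝ) ^ ρ)) := by
          apply setLIntegral_mono measurable_const
          intro x hx
          apply ENNReal.ofReal_le_ofReal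
          apply Real.exp_le_exp.2
          have hxn : (n:ℝ) ≤ ‖x‖ := by
            have := hx.2
            simpa only [Metric.mem_ball, dist_zero_right, not_lt] using this
          have : (n:ℝ) ^ ρ ≤ ‖x‖ ^ ρ := Real.rpow_le_rpow (Nat.cast_nonneg n) hxn hρ.le
          linarith
      _ = ENNReal.ofReal (Real.exp (-(n:ℝ) ^ ρ)) * volume (A n) := by
          rw [setLIntegral_const]
      _ ≤ ENNReal.ofReal (Real.exp (-(n:ℝ) ^ ρ)) * (ENNReal.ofReal (((n:ℝ) + 1) ^ d) * V) :=
          mul_le_mul_right hmeas _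
      _ = ENNReal.ofReal (Real.exp (-(n:ℝ) ^ ρ) * ((n:ℝ) + 1) ^ d) * V := by
          rw [ENNReal.ofReal_mul (Real.exp_nonneg _), mul_assoc]
  calc ∫⁻ x : EuclideanSpace ℝ (Fin d), ENNReal.ofReal (Real.exp (-‖x‖ ^ ρ))
      = ∫⁻ x in Set.univ, ENNReal.ofReal (Real.exp (-‖x‖ ^ ρ)) := (setLIntegral_univ _).symm
    _ ≤ ∫⁻ x in ⋃ n, A n, ENNReal.ofReal (Real.exp (-‖x‖ ^ ρ)) := lintegral_mono_set hcover
    _ ≤ ∑' n, ∫⁻ x in A n, ENNReal.ofReal (Real.exp (-‖x‖ ^ ρ)) := lintegral_iUnion_le _ _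
    _ ≤ ∑' n : ℕ, ENNReal.ofReal (Real.exp (-(n:ℝ) ^ ρ) * ((n:ℝ) + 1) ^ d) * V :=
        ENNReal.tsum_le_tsum step
    _ = (∑' n : ℕ, ENNReal.ofReal (Real.exp (-(n:ℝ) ^ ρ) * ((n:ℝ) + 1) ^ d)) * V :=
        ENNReal.tsum_mul_right
    _ = ENNReal.ofReal (∑' n : ℕ, Real.exp (-(n:ℝ) ^ ρ) * ((n:ℝ) + 1) ^ d) * V := by
        rw [ENNReal.ofReal_tsum_of_nonneg (fun n => by positivity) (aux_summable hρ d)]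
    _ < ⊤ := ENNReal.mul_lt_top ENNReal.ofReal_lt_top hVlt

lemma aux_scale (d : ℕ) {ρ : ℝ} (hρ : 0 < ρ) {s : ℝ} (hs : 0 < s) :
    ∫⁻ x : EuclideanSpace ℝ (Fin d), ENNReal.ofReal (Real.exp (-(s * ‖x‖ ^ ρ))) =
      ENNReal.ofReal (s ^ (-(d:ℝ)/ρ)) *
        ∫⁻ x : EuclideanSpace ℝ (Fin d), ENNReal.ofReal (Real.exp (-‖x‖ ^ ρ)) := by
  set c : ℝ := s ^ ρ⁻¹ with hc
  have hcpos : 0 < c := Real.rpow_pos_of_pos hs _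
  have hg : Measurable fun y : EuclideanSpace ℝ (Fin d) =>
      ENNReal.ofReal (Real.exp (-‖y‖ ^ ρ)) := by
    apply ENNReal.measurable_ofReal.comp
    apply Continuous.measurable
    exact Real.continuous_exp.comp
      ((continuous_norm.rpow_const (fun x => Or.inr hρ.le)).neg)
  have key : ∀ x : EuclideanSpace ℝ (Fin d), s * ‖x‖ ^ ρ = ‖c • x‖ ^ ρ := by
    intro x
    rw [norm_smul, Real.norm_eq_abs, abs_of_pos hcpos,
      Real.mul_rpow hcpos.le (norm_nonneg x), hc, ← Real.rpow_mul hs.le,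
      inv_mul_cancel₀ hρ.ne', Real.rpow_one]
  have key2 : (fun x : EuclideanSpace ℝ (Fin d) => ENNReal.ofReal (Real.exp (-(s * ‖x‖ ^ ρ))))
      = fun x => ENNReal.ofReal (Real.exp (-‖c • x‖ ^ ρ)) := by
    funext x; rw [key x]
  rw [key2]
  have hmap : ∫⁻ x : EuclideanSpace ℝ (Fin d), ENNReal.ofReal (Real.exp (-‖c • x‖ ^ ρ)) =
      ∫⁻ y, ENNReal.ofReal (Real.exp (-‖y‖ ^ ρ)) ∂(Measure.map (c • ·) volume) :=
    (lintegral_map hg (measurable_const_smul c)).symm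
  rw [hmap, Measure.map_addHaar_smul volume hcpos.ne', lintegral_smul_measure]
  congr 1
  rw [finrank_euclideanSpace_fin]
  rw [abs_of_pos (by positivity)]
  rw [hc, ← Real.rpow_natCast (s ^ ρ⁻¹) d, ← Real.rpow_mul hs.le, ← Real.rpow_neg hs.le]
  congr 1
  field_simp

lemma aux_weight (d : ℕ) (hd : 1 ≤ d) (β : ℝ) (hβ : 0 < β) :
    ∃ C : ℝ, 1 ≤ C ∧ ∀ t : ℝ, 0 < t → t ≤ 1 → ∀ r : ℝ≥0∞, 1 ≤ r →
      eLpNorm (fun x : EuclideanSpace ℝ (Fin d) =>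
          (Real.exp (-(t / 4) * (1 + ‖x‖ ^ 2) ^ β) : ℂ)) r volume ≤
        ENNReal.ofReal (C * t ^ (-((d : ℝ) / (2 * β)) * (r⁻¹).toReal)) := by
  have hρ : 0 < 2 * β := by linarith
  set J1 : ℝ≥0∞ := ∫⁻ x : EuclideanSpace ℝ (Fin d),
      ENNReal.ofReal (Real.exp (-‖x‖ ^ (2*β))) with hJ1
  have hJ1top : J1 ≠ ⊤ := (aux_lt_top d hρ).ne
  set K : ℝ := max 1 J1.toReal with hK
  have hK1 : (1:ℝ) ≤ K := le_max_left _ _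
  have hJ1K : J1 ≤ ENNReal.ofReal K := by
    rw [← ENNReal.ofReal_toReal hJ1top]
    exact ENNReal.ofReal_le_ofReal (le_max_right _ _)
  have h4 : (1:ℝ) ≤ (4:ℝ) ^ ((d:ℝ) / (2*β)) :=
    Real.one_le_rpow (by norm_num) (by positivity)
  refine ⟨K * (4:ℝ) ^ ((d:ℝ) / (2*β)), ?_, ?_⟩
  · nlinarith
  intro t ht ht1 r hr
  have hφcont : Continuous fun x : EuclideanSpace ℝ (Fin d) =>
      (Real.exp (-(t / 4) * (1 + ‖x‖ ^ 2) ^ β) : ℂ) := by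
    apply Complex.continuous_ofReal.comp
    apply Real.continuous_exp.comp
    exact (continuous_const.mul
      (((continuous_const.add (continuous_norm.pow 2)).rpow_const
        (fun x => Or.inr hβ.le))))
  have hnorm : ∀ x : EuclideanSpace ℝ (Fin d),
      ‖(Real.exp (-(t / 4) * (1 + ‖x‖ ^ 2) ^ β) : ℂ)‖ =
        Real.exp (-(t / 4) * (1 + ‖x‖ ^ 2) ^ β) := by
    intro x
    rw [Complex.norm_real, Real.norm_eq_abs, abs_of_pos (Real.exp_pos _)]
  have hexp_le_one : ∀ x : EuclideanSpace ℝ (Fin d),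
      Real.exp (-(t / 4) * (1 + ‖x‖ ^ 2) ^ β) ≤ 1 := by
    intro x
    have h0 : (0:ℝ) ≤ (1 + ‖x‖ ^ 2) ^ β := Real.rpow_nonneg (by positivity) _
    have := Real.exp_le_exp.2 (show -(t / 4) * (1 + ‖x‖ ^ 2) ^ β ≤ 0 by nlinarith)
    simpa using this
  rcases eq_or_ne r ⊤ with rfl | hrtop
  · -- r = ∞
    simp only [ENNReal.inv_top, ENNReal.toReal_zero, mul_zero, Real.rpow_zero, mul_one]
    calc eLpNorm _ ⊤ volume ≤ ENNReal.ofReal 1 := by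
          rw [eLpNorm_exponent_top]
          apply eLpNormEssSup_le_of_ae_bound (C := 1)
          filter_upwards with x
          rw [hnorm x]; exact hexp_le_one x
      _ ≤ ENNReal.ofReal (K * (4:ℝ) ^ ((d:ℝ) / (2*β))) :=
          ENNReal.ofReal_le_ofReal (by nlinarith)
  · -- r finite
    have hr0 : r ≠ 0 := by
      intro h; rw [h] at hr; exact absurd hr (by simp)
    set rt : ℝ := r.toReal with hrt
    have hrt1 : 1 ≤ rt := by
      rw [hrt, ← ENNReal.toReal_one]
      exact ENNReal.toReal_mono hrtop hr
    have hrtpos : 0 < rt := by linarith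
    have hinvtoReal : (r⁻¹).toReal = rt⁻¹ := by rw [ENNReal.toReal_inv]
    -- pointwise bound on the r-th power
    have hpt : ∀ x : EuclideanSpace ℝ (Fin d),
        ((‖(Real.exp (-(t / 4) * (1 + ‖x‖ ^ 2) ^ β) : ℂ)‖₊ : ℝ≥0∞)) ^ rt ≤
          ENNReal.ofReal (Real.exp (-((t/4) * ‖x‖ ^ (2*β)))) := by
      intro x
      have hcoe : ((‖(Real.exp (-(t / 4) * (1 + ‖x‖ ^ 2) ^ β) : ℂ)‖₊ : ℝ≥0∞)) =
          ENNReal.ofReal (Real.exp (-(t / 4) * (1 + ‖x‖ ^ 2) ^ β)) := by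
        rw [← enorm_eq_nnnorm, ← ofReal_norm, hnorm x]
      rw [hcoe, ENNReal.ofReal_rpow_of_pos (Real.exp_pos _), ← Real.exp_mul]
      apply ENNReal.ofReal_le_ofReal
      apply Real.exp_le_exp.2
      have h1 : ‖x‖ ^ (2*β) ≤ (1 + ‖x‖ ^ 2) ^ β := by
        rw [Real.rpow_mul (norm_nonneg x), Real.rpow_two]
        apply Real.rpow_le_rpow (by positivity) (by nlinarith [sq_nonneg ‖x‖]) hβ.le
      have h2 : (0:ℝ) ≤ ‖x‖ ^ (2*β) := Real.rpow_nonneg (norm_nonneg x) _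
      have hB0 : (0:ℝ) ≤ (1 + ‖x‖ ^ 2) ^ β := le_trans h2 h1
      have e1 : (t/4) * ‖x‖ ^ (2*β) ≤ (t/4) * (1 + ‖x‖ ^ 2) ^ β :=
        mul_le_mul_of_nonneg_left h1 (by linarith)
      have e2 : (t/4) * (1 + ‖x‖ ^ 2) ^ β ≤ (t/4) * (1 + ‖x‖ ^ 2) ^ β * rt :=
        le_mul_of_one_le_right (by positivity) hrt1
      linarith
    have hlin : ∫⁻ x : EuclideanSpace ℝ (Fin d),
        ((‖(Real.exp (-(t / 4) * (1 + ‖x‖ ^ 2) ^ β) : ℂ)‖₊ : ℝ≥0∞)) ^ rt ∂volume ≤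
          ENNReal.ofReal ((t/4) ^ (-(d:ℝ)/(2*β)) * K) := by
      calc _ ≤ ∫⁻ x : EuclideanSpace ℝ (Fin d),
            ENNReal.ofReal (Real.exp (-((t/4) * ‖x‖ ^ (2*β)))) ∂volume :=
            lintegral_mono hpt
        _ = ENNReal.ofReal ((t/4) ^ (-(d:ℝ)/(2*β))) * J1 := aux_scale d hρ (by linarith)
        _ ≤ ENNReal.ofReal ((t/4) ^ (-(d:ℝ)/(2*β))) * ENNReal.ofReal K :=
            mul_le_mul_right hJ1K _
        _ = ENNReal.ofReal ((t/4) ^ (-(d:ℝ)/(2*β)) * K) := by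
            rw [← ENNReal.ofReal_mul (by positivity)]
    have hreal : (((t/4) ^ (-(d:ℝ)/(2*β)) * K) ^ (1/rt)) ≤
        K * (4:ℝ) ^ ((d:ℝ)/(2*β)) * t ^ (-((d:ℝ)/(2*β)) * (r⁻¹).toReal) := by
      set a : ℝ := (d:ℝ)/(2*β) with ha
      have ha0 : 0 ≤ a := by positivity
      rw [show -(d:ℝ)/(2*β) = -a from by rw [ha]; ring]
      have e1 : ((t/4) ^ (-a) * K) ^ (1/rt) = (t/4) ^ (-a * (1/rt)) * K ^ (1/rt) := by
        rw [Real.mul_rpow (by positivity) (by positivity), ← Real.rpow_mul (by positivity)]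
      have e2 : (t/4 : ℝ) ^ (-a * (1/rt)) = t ^ (-a * (1/rt)) * (4:ℝ) ^ (a * (1/rt)) := by
        rw [Real.div_rpow ht.le (by norm_num : (0:ℝ) ≤ 4), div_eq_mul_inv,
          ← Real.rpow_neg (by norm_num : (0:ℝ) ≤ 4)]
        congr 1
        ring
      have e3 : K ^ (1/rt) ≤ K := by
        have := Real.rpow_le_rpow_of_exponent_le hK1
          (show 1/rt ≤ (1:ℝ) by rw [div_le_one hrtpos]; exact hrt1)
        simpa using this
      have e4 : (4:ℝ) ^ (a * (1/rt)) ≤ (4:ℝ) ^ a := by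
        apply Real.rpow_le_rpow_of_exponent_le (by norm_num)
        calc a * (1/rt) ≤ a * 1 := by
              apply mul_le_mul_of_nonneg_left _ ha0
              rw [div_le_one hrtpos]; exact hrt1
          _ = a := mul_one a
      have e5 : -a * (1/rt) = -a * (r⁻¹).toReal := by
        rw [hinvtoReal, one_div]
      calc ((t/4) ^ (-a) * K) ^ (1/rt) = t ^ (-a * (1/rt)) * (4:ℝ) ^ (a * (1/rt)) * K ^ (1/rt) := by
            rw [e1, e2]
        _ ≤ t ^ (-a * (1/rt)) * (4:ℝ) ^ a * K := by
            have ht0 : (0:ℝ) ≤ t ^ (-a * (1/rt)) := Real.rpow_nonneg ht.le _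
            have h40 : (0:ℝ) ≤ (4:ℝ) ^ (a * (1/rt)) := Real.rpow_nonneg (by norm_num) _
            have hK0 : (0:ℝ) ≤ K ^ (1/rt) := Real.rpow_nonneg (by linarith) _
            apply mul_le_mul _ e3 hK0 (by positivity)
            exact mul_le_mul_of_nonneg_left e4 ht0
        _ = K * (4:ℝ) ^ a * t ^ (-a * (r⁻¹).toReal) := by rw [← e5]; ring
    calc eLpNorm (fun x : EuclideanSpace ℝ (Fin d) =>
            (Real.exp (-(t / 4) * (1 + ‖x‖ ^ 2) ^ β) : ℂ)) r volume
        = (∫⁻ x : EuclideanSpace ℝ (Fin d),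
            ((‖(Real.exp (-(t / 4) * (1 + ‖x‖ ^ 2) ^ β) : ℂ)‖₊ : ℝ≥0∞)) ^ rt ∂volume) ^ (1/rt) :=
          eLpNorm_eq_lintegral_rpow_enorm_toReal hr0 hrtop
      _ ≤ (ENNReal.ofReal ((t/4) ^ (-(d:ℝ)/(2*β)) * K)) ^ (1/rt) :=
          ENNReal.rpow_le_rpow hlin (by positivity)
      _ = ENNReal.ofReal (((t/4) ^ (-(d:ℝ)/(2*β)) * K) ^ (1/rt)) := by
          rw [ENNReal.ofReal_rpow_of_pos]
          have : (0:ℝ) < (t/4) ^ (-(d:ℝ)/(2*β)) := Real.rpow_pos_of_pos (by linarith) _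
          nlinarith
      _ ≤ ENNReal.ofReal (K * (4:ℝ) ^ ((d:ℝ)/(2*β)) *
            t ^ (-((d:ℝ)/(2*β)) * (r⁻¹).toReal)) := ENNReal.ofReal_le_ofReal hreal

theorem stmt10 (d : ℕ) (hd : 1 ≤ d) (β : ℝ) (hβ : 0 < β) (p q : ℝ≥0∞)
    (hq : 1 ≤ q) (hqp : q ≤ p) :
    ∃ C : ℝ, 0 < C ∧
      ∀ t : ℝ, 0 < t → t ≤ 1 → ∀ f : EuclideanSpace ℝ (Fin d) → ℂ, MemLp f p volume →
        eLpNorm (fun x => (Real.exp (-(t / 4) * (1 + ‖x‖ ^ 2) ^ β) : ℂ) * f x) q volume ≤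
          ENNReal.ofReal (C * t ^ (-((d : ℝ) / (2 * β)) * (q⁻¹.toReal - p⁻¹.toReal))) *
            eLpNorm f p volume := by
  obtain ⟨C, hC1, hC⟩ := aux_weight d hd β hβ
  refine ⟨C, by linarith, ?_⟩
  intro t ht ht1 f hf
  set r : ℝ≥0∞ := (q⁻¹ - p⁻¹)⁻¹ with hr
  have hpq_inv : p⁻¹ ≤ q⁻¹ := ENNReal.inv_le_inv.mpr hqp
  have hq_inv_le : q⁻¹ ≤ 1 := by
    simpa using ENNReal.inv_le_inv.mpr hq
  have hrinv : r⁻¹ = q⁻¹ - p⁻¹ := by rw [hr, inv_inv]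
  have hr1 : 1 ≤ r := by
    rw [← ENNReal.inv_le_one, hrinv]
    exact le_trans tsub_le_self hq_inv_le
  have hpqr : 1 / q = 1 / r + 1 / p := by
    rw [one_div, one_div, one_div, hrinv, tsub_add_cancel_of_le hpq_inv]
  have htoReal : (r⁻¹).toReal = q⁻¹.toReal - p⁻¹.toReal := by
    rw [hrinv, ENNReal.toReal_sub_of_le hpq_inv]
    exact ne_top_of_le_ne_top ENNReal.one_ne_top hq_inv_le
  have hφcont : Continuous fun x : EuclideanSpace ℝ (Fin d) =>
      (Real.exp (-(t / 4) * (1 + ‖x‖ ^ 2) ^ β) : ℂ) := by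
    apply Complex.continuous_ofReal.comp
    apply Real.continuous_exp.comp
    exact (continuous_const.mul
      (((continuous_const.add (continuous_norm.pow 2)).rpow_const
        (fun x => Or.inr hβ.le))))
  have hHolder := eLpNorm_smul_le_mul_eLpNorm (μ := volume) (f := f)
    (φ := fun x : EuclideanSpace ℝ (Fin d) =>
      (Real.exp (-(t / 4) * (1 + ‖x‖ ^ 2) ^ β) : ℂ))
    hf.1 hφcont.aestronglyMeasurable (hpqr := ⟨by simpa only [one_div] using hpqr.symm⟩)
  calc eLpNorm (fun x => (Real.exp (-(t / 4) * (1 + ‖x‖ ^ 2) ^ β) : ℂ) * f x) q volume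
      ≤ eLpNorm (fun x : EuclideanSpace ℝ (Fin d) =>
          (Real.exp (-(t / 4) * (1 + ‖x‖ ^ 2) ^ β) : ℂ)) r volume * eLpNorm f p volume :=
        hHolder
    _ ≤ ENNReal.ofReal (C * t ^ (-((d : ℝ) / (2 * β)) * (r⁻¹).toReal)) * eLpNorm f p volume :=
        mul_le_mul_left (hC t ht ht1 r hr1) _
    _ = ENNReal.ofReal (C * t ^ (-((d : ℝ) / (2 * β)) * (q⁻¹.toReal - p⁻¹.toReal))) *
          eLpNorm f p volume := by rw [htoReal]
end
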